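/- Let G ∈ {C5, bull, gem, co-gem} and let (A,B) be a vertex partition of G with |A| < |B|, and let H = G ⊕ P for some P with (A,B) ∈ P ⊆ {(A,A),(B,B),(A,B)}. If H has at least two isolated vertices, then G is the gem, and either A consists of two non-adjacent vertices of degree 2 and 3 with P = {(B,B),(A,B)}, or A consists of the dominating vertex and a vertex of degree 3 with P = {(A,A),(A,B)}. Moreover, in these cases H has exactly two isolated vertices. -/

import Mathlib

/-!
Since `B = Aᶜ` and `(A, B) ∈ P`, the graph `G ⊕ P` is determined by `A` and by which of
`(A, A)` and `(B, B)` belong to `P`. Replacing it by a model with decidable adjacency turns the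
theorem into a finite check over the four graphs, the sets `A` with `|A| ≤ 2` and the four
choices of `P`, which `decide` carries out.
-/

open SimpleGraph Set

namespace FlipWidth

variable {V : Type*}

/-- The flip of a graph `G` by a pair `(A, B)` of vertex sets. -/
def flip (G : SimpleGraph V) (A B : Set V) : SimpleGraph V where
  Adj u v := u ≠ v ∧ Xor' ((u ∈ A ∧ v ∈ B) ∨ (u ∈ B ∧ v ∈ A)) (G.Adj u v)
  symm := by
    constructor
    intro u v ⟨h, hx⟩
    refine ⟨h.symm, ?_⟩
    have := G.adj_comm u v
    unfold Xor' Xor at *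
    tauto
  loopless := by constructor; intro v h; exact h.1 rfl

/-- Whether a pair of vertex sets "crosses" the (unordered) pair of vertices `u, v`. -/
def crossPair (p : Set V × Set V) (u v : V) : Prop :=
  (u ∈ p.1 ∧ v ∈ p.2) ∨ (u ∈ p.2 ∧ v ∈ p.1)

/-- The graph obtained from `G` by flipping every pair in `P` (order irrelevant
since flips commute: adjacency is toggled according to the parity of the number
of pairs in `P` crossing the two vertices). -/
def flips (G : SimpleGraph V) (P : Set (Set V × Set V)) : SimpleGraph V where
  Adj u v := u ≠ v ∧ Xor' (Odd {p ∈ P | crossPair p u v}.ncard) (G.Adj u v)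
  symm := by
    constructor
    intro u v ⟨h, hx⟩
    refine ⟨h.symm, ?_⟩
    have hset : {p ∈ P | crossPair p v u} = {p ∈ P | crossPair p u v} := by
      ext p; unfold crossPair; constructor <;> (intro ⟨h1, h2⟩; exact ⟨h1, by tauto⟩)
    rw [hset]
    have := G.adj_comm u v
    unfold Xor' Xor at *
    tauto
  loopless := by constructor; intro v h; exact h.1 rfl

/-- `A` is complete to `B` in `G`. -/
def Complete (G : SimpleGraph V) (A B : Set V) : Prop :=
  ∀ a ∈ A, ∀ b ∈ B, G.Adj a b

/-- `A` is anti-complete to `B` in `G`. -/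
def Anticomplete (G : SimpleGraph V) (A B : Set V) : Prop :=
  ∀ a ∈ A, ∀ b ∈ B, ¬ G.Adj a b

/-- `(V1, V2)` is a bi-join in `G`. -/
def IsBiJoin (G : SimpleGraph V) (V1 V2 : Set V) : Prop :=
  ∃ W1 W2 : Set V, W1 ⊆ V1 ∧ W2 ⊆ V2 ∧
    Complete G W1 W2 ∧ Anticomplete G W1 (V2 \ W2) ∧
    Complete G (V1 \ W1) (V2 \ W2) ∧ Anticomplete G (V1 \ W1) W2

/-- `(W1, V1\W1, W2, V2\W2)` is a bi-join partition of `(V1, V2)`. -/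
def IsBiJoinPartition (G : SimpleGraph V) (V1 V2 W1 W2 : Set V) : Prop :=
  W1 ⊆ V1 ∧ W2 ⊆ V2 ∧
    Complete G W1 W2 ∧ Anticomplete G W1 (V2 \ W2) ∧
    Complete G (V1 \ W1) (V2 \ W2) ∧ Anticomplete G (V1 \ W1) W2

/-- Degree of a vertex, as the cardinality of its neighborhood. -/
noncomputable def ndeg (G : SimpleGraph V) (v : V) : ℕ := (G.neighborSet v).ncard

/-- `u` and `v` lie in two distinct sets among `A`, `B`, `C`. -/
def crossParts (A B C : Set V) (u v : V) : Prop :=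
  (u ∈ A ∧ v ∈ B) ∨ (u ∈ B ∧ v ∈ A) ∨ (u ∈ A ∧ v ∈ C) ∨ (u ∈ C ∧ v ∈ A) ∨
    (u ∈ B ∧ v ∈ C) ∨ (u ∈ C ∧ v ∈ B)

/-- The cycle on 5 vertices. -/
def C5 : SimpleGraph (Fin 5) := SimpleGraph.fromRel (fun u v => v = u + 1)

/-- The bull: a triangle `0,1,2` with pendant vertices `3` (at `0`) and `4` (at `1`). -/
def bull : SimpleGraph (Fin 5) :=
  SimpleGraph.fromRel (fun u v =>
    (u, v) ∈ ([(0,1),(1,2),(0,2),(0,3),(1,4)] : List (Fin 5 × Fin 5)))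

/-- The gem: the path `0-1-2-3` plus a dominating vertex `4`. -/
def gem : SimpleGraph (Fin 5) :=
  SimpleGraph.fromRel (fun u v =>
    (u, v) ∈ ([(0,1),(1,2),(2,3),(4,0),(4,1),(4,2),(4,3)] : List (Fin 5 × Fin 5)))

/-- The co-gem: the path `0-1-2-3` plus an isolated vertex `4`. -/
def cogem : SimpleGraph (Fin 5) :=
  SimpleGraph.fromRel (fun u v =>
    (u, v) ∈ ([(0,1),(1,2),(2,3)] : List (Fin 5 × Fin 5)))

/-- The four obstruction graphs. -/
def Fobs : Set (SimpleGraph (Fin 5)) := {C5, bull, gem, cogem}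

instance : DecidableRel C5.Adj :=
  fun u v => inferInstanceAs (Decidable (u ≠ v ∧ (v = u + 1 ∨ u = v + 1)))
instance : DecidableRel bull.Adj :=
  fun u v => inferInstanceAs (Decidable (u ≠ v ∧ (_ ∈ _ ∨ _ ∈ _)))
instance : DecidableRel gem.Adj :=
  fun u v => inferInstanceAs (Decidable (u ≠ v ∧ (_ ∈ _ ∨ _ ∈ _)))
instance : DecidableRel cogem.Adj :=
  fun u v => inferInstanceAs (Decidable (u ≠ v ∧ (_ ∈ _ ∨ _ ∈ _)))

open Finset in
lemma ncard_sep_odd_iff_of_subset_triple {α : Type*} {a b c : α} (hab : a ≠ b) (hac : a ≠ c)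
    (hbc : b ≠ c) {P : Set α} (hP : P ⊆ {a, b, c}) (Q : α → Prop) :
    Odd {p ∈ P | Q p}.ncard ↔ Xor (a ∈ P ∧ Q a) (Xor (b ∈ P ∧ Q b) (c ∈ P ∧ Q c)) := by
  classical
  have hsep : {p ∈ P | Q p} = ↑(({a, b, c} : Finset α).filter (fun p => p ∈ P ∧ Q p)) := by
    ext p
    simp only [Set.mem_sep_iff, coe_filter]
    exact ⟨fun h => ⟨by simpa using hP h.1, h⟩, fun h => h.2⟩
  rw [hsep, Set.ncard_coe_finset, card_filter, sum_insert (by simp [hab, hac]),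
    sum_insert (by simp [hbc]), sum_singleton]
  by_cases ha : a ∈ P ∧ Q a <;> by_cases hb : b ∈ P ∧ Q b <;> by_cases hc : c ∈ P ∧ Q c <;>
    simp [ha, hb, hc, Nat.odd_iff]

lemma eq_pair_of_subset_triple {α : Type*} {a b c : α} {P : Set α} (hP : P ⊆ {a, b, c})
    (ha : a ∉ P) (hb : b ∈ P) (hc : c ∈ P) : P = {b, c} := by
  refine Set.Subset.antisymm (fun p hp => ?_)
    (Set.insert_subset hb (Set.singleton_subset_iff.2 hc))
  rcases hP hp with rfl | h
  · exact absurd hp ha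
  · exact h

lemma ndeg_eq_degree (G : SimpleGraph V) (v : V) [Fintype (G.neighborSet v)] :
    ndeg G v = G.degree v := by
  rw [ndeg, ← card_neighborSet_eq_degree, Set.ncard_eq_toFinset_card', Set.toFinset_card]

open Finset in
lemma ncard_setOf_neighborSet_eq_empty [Fintype V] (G : SimpleGraph V) [DecidableRel G.Adj] :
    {v | G.neighborSet v = ∅}.ncard = #{v | ∀ u, ¬ G.Adj v u} := by
  rw [← Set.ncard_coe_finset]
  congr 1
  ext v
  simp [Set.eq_empty_iff_forall_notMem]

lemma flips_adj_iff_of_subset_triple (G : SimpleGraph V) {A B : Set V} (hAB : A ≠ B)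
    {P : Set (Set V × Set V)} (hP : P ⊆ {(A, A), (B, B), (A, B)}) (u v : V) :
    (flips G P).Adj u v ↔ u ≠ v ∧
      Xor (Xor ((A, A) ∈ P ∧ u ∈ A ∧ v ∈ A)
        (Xor ((B, B) ∈ P ∧ u ∈ B ∧ v ∈ B)
          ((A, B) ∈ P ∧ (u ∈ A ∧ v ∈ B ∨ u ∈ B ∧ v ∈ A)))) (G.Adj u v) := by
  have hodd := ncard_sep_odd_iff_of_subset_triple (fun h => hAB (congrArg Prod.snd h))
    (fun h => hAB (congrArg Prod.snd h)) (fun h => hAB.symm (congrArg Prod.fst h)) hP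
    (fun p => crossPair p u v)
  show u ≠ v ∧ Xor (Odd _) _ ↔ _
  simp only [crossPair, or_self] at hodd ⊢
  rw [hodd]

/-- A decidable model of `flips G P` for `(s, sᶜ) ∈ P ⊆ {(s, s), (sᶜ, sᶜ), (s, sᶜ)}`:
`flipIn` and `flipOut` record whether `(s, s)` and `(sᶜ, sᶜ)` belong to `P`. -/
def crossFlip [DecidableEq V] (G : SimpleGraph V) (s : Finset V) (flipIn flipOut : Bool) :
    SimpleGraph V where
  Adj u v := u ≠ v ∧
    Xor ((if u ∈ s ↔ v ∈ s then (if u ∈ s then flipIn else flipOut) else true) = true) (G.Adj u v)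
  symm := ⟨fun u v ⟨hne, h⟩ => by
    refine ⟨hne.symm, ?_⟩
    rw [G.adj_comm]
    by_cases hu : u ∈ s <;> by_cases hv : v ∈ s <;> simp_all⟩
  loopless := ⟨fun v h => h.1 rfl⟩

instance [DecidableEq V] (G : SimpleGraph V) [DecidableRel G.Adj] (s : Finset V)
    (flipIn flipOut : Bool) : DecidableRel (crossFlip G s flipIn flipOut).Adj :=
  fun _ _ => inferInstanceAs (Decidable (_ ∧ Xor _ _))

open Classical in
lemma flips_eq_crossFlip [DecidableEq V] (G : SimpleGraph V) (s : Finset V)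
    {P : Set (Set V × Set V)} (hne : (s : Set V) ≠ (↑s)ᶜ) (hcross : (↑s, (↑s)ᶜ) ∈ P)
    (hP : P ⊆ {(↑s, ↑s), ((↑s)ᶜ, (↑s)ᶜ), (↑s, (↑s)ᶜ)}) :
    flips G P = crossFlip G s (decide ((↑s, ↑s) ∈ P)) (decide (((↑s)ᶜ, (↑s)ᶜ) ∈ P)) := by
  ext u v
  rw [flips_adj_iff_of_subset_triple G hne hP]
  show _ ↔ u ≠ v ∧ _
  by_cases hu : u ∈ s <;> by_cases hv : v ∈ s <;> simp [hu, hv, hcross, Xor]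

section FiveVertices

open Finset

lemma crossFlip_C5_card_isolated_lt_two (s : Finset (Fin 5)) (flipIn flipOut : Bool) :
    {v | (crossFlip C5 s flipIn flipOut).neighborSet v = ∅}.ncard < 2 := by
  rw [ncard_setOf_neighborSet_eq_empty]
  revert s flipIn flipOut; decide

lemma crossFlip_bull_card_isolated_lt_two (s : Finset (Fin 5)) (flipIn flipOut : Bool) :
    {v | (crossFlip bull s flipIn flipOut).neighborSet v = ∅}.ncard < 2 := by
  rw [ncard_setOf_neighborSet_eq_empty]
  revert s flipIn flipOut; decide

lemma crossFlip_cogem_card_isolated_lt_two (s : Finset (Fin 5)) (flipIn flipOut : Bool) :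
    {v | (crossFlip cogem s flipIn flipOut).neighborSet v = ∅}.ncard < 2 := by
  rw [ncard_setOf_neighborSet_eq_empty]
  revert s flipIn flipOut; decide

lemma crossFlip_gem_of_two_le_card_isolated (s : Finset (Fin 5)) (hs : 2 * #s < 5)
    (flipIn flipOut : Bool)
    (h : 2 ≤ {v | (crossFlip gem s flipIn flipOut).neighborSet v = ∅}.ncard) :
    ((s = {0, 2} ∨ s = {1, 3}) ∧ flipIn = false ∧ flipOut = true ∨
      (s = {1, 4} ∨ s = {2, 4}) ∧ flipIn = true ∧ flipOut = false) ∧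
      {v | (crossFlip gem s flipIn flipOut).neighborSet v = ∅}.ncard = 2 := by
  rw [ncard_setOf_neighborSet_eq_empty] at h ⊢
  revert s flipIn flipOut; decide

lemma gem_exists_nonadj_degree_two_three {s : Finset (Fin 5)} (hs : s = {0, 2} ∨ s = {1, 3}) :
    ∃ x y : Fin 5, ndeg gem x = 2 ∧ ndeg gem y = 3 ∧ ¬ gem.Adj x y ∧ x ≠ y ∧
      (s : Set (Fin 5)) = {x, y} := by
  simp only [ndeg_eq_degree]
  rcases hs with rfl | rfl
  · exact ⟨0, 2, by decide, by decide, by decide, by decide, by simp⟩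
  · exact ⟨3, 1, by decide, by decide, by decide, by decide, by simp [Set.pair_comm]⟩

lemma gem_exists_dominating_degree_three {s : Finset (Fin 5)} (hs : s = {1, 4} ∨ s = {2, 4}) :
    ∃ x y : Fin 5, (∀ w, w ≠ x → gem.Adj x w) ∧ ndeg gem y = 3 ∧ (s : Set (Fin 5)) = {x, y} := by
  simp only [ndeg_eq_degree]
  rcases hs with rfl | rfl
  · exact ⟨4, 1, by decide, by decide, by simp [Set.pair_comm]⟩
  · exact ⟨4, 2, by decide, by decide, by simp [Set.pair_comm]⟩

end FiveVertices

end FlipWidth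
open FlipWidth in
/-- If `G ∈ {C5, bull, gem, cogem}`, `(A,B)` is a vertex partition of `G` with
`|A| < |B|`, `(A,B) ∈ P ⊆ {(A,A),(B,B),(A,B)}` and `H = G ⊕ P` has at least two
isolated vertices, then `G` is the gem and either `A` consists of two
non-adjacent vertices of degree `2` and `3` with `P = {(B,B),(A,B)}`, or `A`
consists of the dominating vertex and a vertex of degree `3` with
`P = {(A,A),(A,B)}`; moreover `H` has exactly two isolated vertices. -/
theorem two_isolated_cross_flip :
    ∀ G ∈ Fobs, ∀ A B : Set (Fin 5), Disjoint A B → A ∪ B = Set.univ →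
      A.ncard < B.ncard →
      ∀ P : Set (Set (Fin 5) × Set (Fin 5)),
        (A, B) ∈ P → P ⊆ {(A, A), (B, B), (A, B)} →
      2 ≤ {v | (flips G P).neighborSet v = ∅}.ncard →
      G = gem ∧
        ((∃ x y : Fin 5, ndeg G x = 2 ∧ ndeg G y = 3 ∧ ¬ G.Adj x y ∧ x ≠ y ∧
            A = {x, y} ∧ P = {(B, B), (A, B)}) ∨
          (∃ x y : Fin 5, (∀ w : Fin 5, w ≠ x → G.Adj x w) ∧ ndeg G y = 3 ∧
            A = {x, y} ∧ P = {(A, A), (A, B)})) ∧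
        {v | (flips G P).neighborSet v = ∅}.ncard = 2 := by
  intro G hG A B hdisj huniv hcard P hcross hP h2
  obtain rfl : B = Aᶜ := (IsCompl.of_eq hdisj.eq_bot huniv).compl_eq.symm
  obtain ⟨s, rfl⟩ := A.toFinite.exists_finset_coe
  have hs : 2 * s.card < 5 := by
    rw [← Finset.coe_compl, Set.ncard_coe_finset, Set.ncard_coe_finset, Finset.card_compl,
      Fintype.card_fin] at hcard
    omega
  rw [flips_eq_crossFlip G s (fun h => hcard.ne (congrArg Set.ncard h)) hcross hP] at h2 ⊢
  simp only [Fobs, Set.mem_insert_iff, Set.mem_singleton_iff] at hG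
  rcases hG with rfl | rfl | rfl | rfl
  · exact absurd h2 (crossFlip_C5_card_isolated_lt_two s _ _).not_ge
  · exact absurd h2 (crossFlip_bull_card_isolated_lt_two s _ _).not_ge
  · obtain ⟨hcase, hcount⟩ := crossFlip_gem_of_two_le_card_isolated s hs _ _ h2
    refine ⟨rfl, ?_, hcount⟩
    rcases hcase with ⟨hsA, hin, hout⟩ | ⟨hsA, hin, hout⟩
    · obtain ⟨x, y, hx, hy, hxy, hne, hA⟩ := gem_exists_nonadj_degree_two_three hsA
      exact .inl ⟨x, y, hx, hy, hxy, hne, hA,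
        eq_pair_of_subset_triple hP (by simpa using hin) (by simpa using hout) hcross⟩
    · obtain ⟨x, y, hx, hy, hA⟩ := gem_exists_dominating_degree_three hsA
      refine .inr ⟨x, y, hx, hy, hA, ?_⟩
      rw [Set.insert_comm] at hP
      exact eq_pair_of_subset_triple hP (by simpa using hout) (by simpa using hin) hcross
  · exact absurd h2 (crossFlip_cogem_card_isolated_lt_two s _ _).not_ge
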